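/- arXiv:2202.04705 — 2 statements merged into one kernel-verified Lean document; each statement's English description precedes it below -/
import Mathlib

section
/- Under the reduction from γCkC (with all m_ℓ = 1) to MobileVaccClinic, any (ρ, α)-bicriteria solution F for the MobileVaccClinic instance (i.e., |F| ≤ α k and max_ℓ d(S_{p_ℓ}, F) ≤ ρ R_OPT) is a (ρ, α)-bicriteria solution for the γCkC instance: |F| ≤ α k and for every color ℓ there is a point of C_ℓ within distance ρ R* of F. -/
/-- Distance between two finite sets of points: `min_{a∈A, b∈B} dist a b`. -/
noncomputable def fdist {C : Type*} [MetricSpace C] (A B : Finset C) : ℝ :=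
  sInf {r : ℝ | ∃ a ∈ A, ∃ b ∈ B, r = dist a b}

/-- Distance from a point to a finite set: `min_{b∈B} dist x b`. -/
noncomputable def pdist {C : Type*} [MetricSpace C] (x : C) (B : Finset C) : ℝ :=
  sInf {r : ℝ | ∃ b ∈ B, r = dist x b}

/-- Under the reduction from γCkC (all `m_ℓ = 1`) to MobileVaccClinic
(clients `p_ℓ` with `S_{p_ℓ} = C_ℓ`, sites `= C`, budget `k`, optimal radius `R_OPT ≤ R*`),
any `(ρ, α)`-bicriteria solution `F` for MobileVaccClinic — `|F| ≤ α k` and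
`max_ℓ d(C_ℓ, F) ≤ ρ R_OPT` — is a `(ρ, α)`-bicriteria solution for γCkC: `|F| ≤ α k`
and every color class `C_ℓ` has a point within distance `ρ R*` of `F`. -/
theorem stmt3 {C : Type*} [MetricSpace C] (γ k : ℕ) (Cl : Fin γ → Finset C)
    (hCl : ∀ ℓ, (Cl ℓ).Nonempty)
    (Rstar ROPT : ℝ) (hRle : ROPT ≤ Rstar) (hROPTnn : 0 ≤ ROPT)
    (ρ α : ℝ) (hρ : 0 ≤ ρ)
    (F : Finset C) (hFne : F.Nonempty)
    (hFcard : (F.card : ℝ) ≤ α * k)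
    (hFrad : ∀ ℓ : Fin γ, fdist (Cl ℓ) F ≤ ρ * ROPT) :
    (F.card : ℝ) ≤ α * k ∧ ∀ ℓ : Fin γ, ∃ j ∈ Cl ℓ, pdist j F ≤ ρ * Rstar := by
  refine ⟨hFcard, fun ℓ => ?_⟩
  set S : Set ℝ := {r : ℝ | ∃ a ∈ Cl ℓ, ∃ b ∈ F, r = dist a b} with hS
  have hfin : S.Finite := by
    have : S ⊆ (fun p : C × C => dist p.1 p.2) '' ((Cl ℓ : Set C) ×ˢ (F : Set C)) := by
      rintro r ⟨a, ha, b, hb, rfl⟩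
      exact ⟨(a, b), ⟨ha, hb⟩, rfl⟩
    exact Set.Finite.subset (Set.Finite.image _ (((Cl ℓ).finite_toSet.prod F.finite_toSet))) this
  obtain ⟨a0, ha0⟩ := hCl ℓ
  obtain ⟨b0, hb0⟩ := hFne
  have hne : S.Nonempty := ⟨dist a0 b0, a0, ha0, b0, hb0, rfl⟩
  have hmem : sInf S ∈ S := hne.csInf_mem hfin
  obtain ⟨a, ha, b, hb, hab⟩ := hmem
  refine ⟨a, ha, ?_⟩
  have h1 : pdist a F ≤ dist a b := by
    apply csInf_le
    · exact ⟨0, fun r ⟨c, _, hr⟩ => hr ▸ dist_nonneg⟩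
    · exact ⟨b, hb, rfl⟩
  calc pdist a F ≤ dist a b := h1
    _ = fdist (Cl ℓ) F := hab.symm
    _ ≤ ρ * ROPT := hFrad ℓ
    _ ≤ ρ * Rstar := mul_le_mul_of_nonneg_left hRle hρ
end

section
/- In the capacitated MobileVaccClinic reduction: suppose F* with assignment σ*: P → F* satisfies d(S_p, σ*(p)) ≤ R*, |σ*^{-1}(f)| ≤ L for all f ∈ F*, and |F*| ≤ k. Define A = {i_p : p ∈ P} where i_p ∈ S_p satisfies d(i_p, σ*(p)) ≤ R*, with multiplicities given by the number of clients using each location. Then the capacitated k-supplier instance on demand multiset A with capacity L and sites S admits a solution of value at most R*, and any ρ-approximate capacitated solution yields a ρ-approximate capacitated MobileVaccClinic solution. -/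
/-- Distance from a finite set to a point: `min_{a∈A} dist a y`. -/
noncomputable def spdist {C : Type*} [MetricSpace C] (A : Finset C) (y : C) : ℝ :=
  sInf {r : ℝ | ∃ a ∈ A, r = dist a y}

/-- Capacitated reduction. Suppose `F*` with assignment `σ*` satisfies
`d(S_p, σ*(p)) ≤ R*`, each facility serves at most `L` clients, and `|F*| ≤ k`; for each
client pick `i_p ∈ S_p` with `d(i_p, σ*(p)) ≤ R*`. Then the capacitated `k`-supplier
instance on the demand points `{i_p}` (with multiplicity) has optimum `OPTcap ≤ R*`, and
any `ρ`-approximate capacitated `k`-supplier solution `(F, τ)` (radius `≤ ρ·OPTcap`)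
yields a capacitated MobileVaccClinic solution of radius at most `ρ R*`. -/
theorem stmt13 {C : Type*} [MetricSpace C] [DecidableEq C] {ι : Type*}
    (P : Finset ι) (hPne : P.Nonempty) (S : ι → Finset C)
    (hS : ∀ p ∈ P, (S p).Nonempty)
    (Sites : Finset C) (k L : ℕ)
    (Fstar : Finset C) (hFstarsub : Fstar ⊆ Sites) (hFstarcard : Fstar.card ≤ k)
    (σs : ι → C) (hσmem : ∀ p ∈ P, σs p ∈ Fstar)
    (Rstar : ℝ) (hσrad : ∀ p ∈ P, spdist (S p) (σs p) ≤ Rstar)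
    (hσcap : ∀ f ∈ Fstar, (P.filter fun p => σs p = f).card ≤ L)
    (ip : ι → C) (hipmem : ∀ p ∈ P, ip p ∈ S p)
    (hiprad : ∀ p ∈ P, dist (ip p) (σs p) ≤ Rstar)
    (OPTcap : ℝ)
    (hOPTcap : IsLeast
      {r : ℝ | ∃ (F : Finset C) (τ : ι → C), F ⊆ Sites ∧ F.card ≤ k ∧
        (∀ p ∈ P, τ p ∈ F ∧ dist (ip p) (τ p) ≤ r) ∧
        ∀ f ∈ F, (P.filter fun p => τ p = f).card ≤ L} OPTcap) :
    OPTcap ≤ Rstar ∧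
    ∀ (ρ : ℝ) (F : Finset C) (τ : ι → C), 0 ≤ ρ → F ⊆ Sites → F.card ≤ k →
      (∀ p ∈ P, τ p ∈ F ∧ dist (ip p) (τ p) ≤ ρ * OPTcap) →
      (∀ f ∈ F, (P.filter fun p => τ p = f).card ≤ L) →
      ∀ p ∈ P, spdist (S p) (τ p) ≤ ρ * Rstar := by
  have hOle : OPTcap ≤ Rstar := by
    apply hOPTcap.2
    exact ⟨Fstar, σs, hFstarsub, hFstarcard,
      fun p hp => ⟨hσmem p hp, hiprad p hp⟩, hσcap⟩
  refine ⟨hOle, ?_⟩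
  intro ρ F τ hρ hFsub hFcard hassign hcap p hp
  have h1 : spdist (S p) (τ p) ≤ dist (ip p) (τ p) := by
    apply csInf_le
    · exact ⟨0, fun r ⟨a, _, hr⟩ => hr ▸ dist_nonneg⟩
    · exact ⟨ip p, hipmem p hp, rfl⟩
  calc spdist (S p) (τ p) ≤ dist (ip p) (τ p) := h1
    _ ≤ ρ * OPTcap := (hassign p hp).2
    _ ≤ ρ * Rstar := by nlinarith
end
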